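/- arXiv:1710.08056 — 6 statements merged into one kernel-verified Lean document; each statement's English description precedes it below -/
import Mathlib

section
/- The cubic hypersurface Y in P^{n+1} defined by f(y_0,...,y_n) + l(y_0,...,y_n)·y_{n+1}^2 = 0 is smooth, provided that X = V(f) ⊂ P^n is a smooth cubic hypersurface and the hyperplane H = V(l) ⊂ P^n intersects X transversely. -/
/-!
Let `t = y_{n+1}` at a singular point `y` of `F = f + l t²`. Since `f` and `l` do not involve `t`,
`∂F/∂t = 2 l t`, so either `t = 0`, and `y` is a singular point of `X`, or `l(y) = f(y) = 0` and
`∇f + t² ∇l = 0` at `y`. In the second case the same holds at the projection `y'` of `y` to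
`t = 0`, contradicting transversality unless `y' = 0`. At `y' = 0` the gradient of the cubic `f`
vanishes, which forces the constant gradient of the linear form `l` to vanish, so `l = 0`.
-/

open MvPolynomial

namespace MvPolynomial

variable {R σ : Type*} [CommSemiring R]

lemma vars_pderiv_subset (i : σ) (p : MvPolynomial σ R) : (pderiv i p).vars ⊆ p.vars := by
  classical
  intro j hj
  obtain ⟨m, hm, hjm⟩ := (mem_vars_iff_mem_support j).1 hj
  rw [mem_support_iff, coeff_pderiv] at hm
  refine (mem_vars_iff_mem_support j).2
    ⟨m + Finsupp.single i 1, mem_support_iff.2 (left_ne_zero_of_mul hm), ?_⟩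
  simp only [Finsupp.mem_support_iff, Finsupp.add_apply] at hjm ⊢
  omega

lemma notMem_vars_of_pderiv_eq_zero [NoZeroDivisors R] [CharZero R] {i : σ}
    {p : MvPolynomial σ R} (h : pderiv i p = 0) : i ∉ p.vars := by
  classical
  intro hi
  obtain ⟨m, hm, him⟩ := (mem_vars_iff_mem_support i).1 hi
  have hle : Finsupp.single i 1 ≤ m :=
    Finsupp.single_le_iff.2 (Nat.one_le_iff_ne_zero.2 (Finsupp.mem_support_iff.1 him))
  have hcoeff := coeff_pderiv (i := i) p (m - Finsupp.single i 1)
  rw [h, coeff_zero, tsub_add_cancel_of_le hle, eq_comm, mul_eq_zero] at hcoeff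
  exact hcoeff.elim (mem_support_iff.1 hm) (Nat.cast_add_one_ne_zero _)

lemma eval_update_of_notMem_vars [DecidableEq σ] {i : σ} {p : MvPolynomial σ R}
    (h : i ∉ p.vars) (y : σ → R) (a : R) : eval (Function.update y i a) p = eval y p :=
  eval₂Hom_congr' rfl (fun _ hk _ => Function.update_of_ne (ne_of_mem_of_not_mem hk h) a y) rfl

section CharZero

variable [DecidableEq σ] [NoZeroDivisors R] [CharZero R] {j : σ} {p : MvPolynomial σ R}

lemma eval_update_of_pderiv_eq_zero (h : pderiv j p = 0) (y : σ → R) (a : R) :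
    eval (Function.update y j a) p = eval y p :=
  eval_update_of_notMem_vars (notMem_vars_of_pderiv_eq_zero h) y a

lemma eval_update_pderiv_of_pderiv_eq_zero (h : pderiv j p = 0) (i : σ) (y : σ → R) (a : R) :
    eval (Function.update y j a) (pderiv i p) = eval y (pderiv i p) :=
  eval_update_of_notMem_vars
    (fun hj => notMem_vars_of_pderiv_eq_zero h (vars_pderiv_subset i p hj)) y a

end CharZero

lemma eval_pderiv_add_mul_X_sq (f l : MvPolynomial σ R) (i j : σ) (y : σ → R) :
    eval y (pderiv i (f + l * X j ^ 2)) = eval y (pderiv i f) + y j ^ 2 * eval y (pderiv i l) +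
      2 * (eval y l * y j) * eval y (pderiv i (X j)) := by
  simp only [map_add, map_mul, map_pow, pderiv_mul, pderiv_pow, eval_X, Nat.cast_ofNat, map_ofNat]
  ring

lemma IsHomogeneous.eval_zero_eq_zero {p : MvPolynomial σ R} {n : ℕ} (hp : p.IsHomogeneous n)
    (hn : n ≠ 0) : eval 0 p = 0 := by
  rw [eval_zero, constantCoeff_eq]
  exact hp.coeff_eq_zero (by simpa using hn.symm)

lemma IsHomogeneous.eq_zero_of_eval_pderiv_eq_zero [Fintype σ] {l : MvPolynomial σ R}
    (hl : l.IsHomogeneous 1) (y : σ → R) (h : ∀ i, eval y (pderiv i l) = 0) : l = 0 := by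
  have hpderiv : ∀ i, pderiv i l = 0 := fun i => by
    have hconst := hl.pderiv (i := i)
    rw [← totalDegree_zero_iff_isHomogeneous, totalDegree_eq_zero_iff_eq_C] at hconst
    have hy := h i
    rw [hconst, eval_C] at hy
    rw [hconst, hy, C_0]
  simpa [hpderiv] using hl.sum_X_mul_pderiv.symm

end MvPolynomial

/-- If `X = V(f) ⊂ P^n` is a smooth cubic hypersurface and the hyperplane
`H = V(l)` intersects `X` transversely, then the cubic hypersurface
`Y = V(f + l·y_{n+1}^2) ⊂ P^{n+1}` is smooth.  Here `f` and `l` are homogeneous of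
degrees 3 and 1 in `y_0,…,y_n` (i.e. they do not involve the last variable `y_{n+1}`). -/
theorem cubic_Y_smooth (n : ℕ) (f l : MvPolynomial (Fin (n + 2)) ℂ)
    (hf3 : f.IsHomogeneous 3) (hl1 : l.IsHomogeneous 1) (hl : l ≠ 0)
    (hfvar : pderiv (Fin.last (n + 1)) f = 0)
    (hlvar : pderiv (Fin.last (n + 1)) l = 0)
    -- `X = V(f) ⊂ P^n` is smooth
    (hXsm : ∀ y : Fin (n + 2) → ℂ, y ≠ 0 → y (Fin.last (n + 1)) = 0 →
      eval y f = 0 → (∀ i, eval y (pderiv i f) = 0) → False)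
    -- `H = V(l)` intersects `X` transversely
    (htrans : ∀ y : Fin (n + 2) → ℂ, y ≠ 0 → y (Fin.last (n + 1)) = 0 →
      eval y f = 0 → eval y l = 0 →
      LinearIndependent ℂ
        ![fun i => eval y (pderiv i f), fun i => eval y (pderiv i l)]) :
    ∀ y : Fin (n + 2) → ℂ, y ≠ 0 →
      ¬ (eval y (f + l * (X (Fin.last (n + 1))) ^ 2) = 0 ∧
        ∀ i, eval y (pderiv i (f + l * (X (Fin.last (n + 1))) ^ 2)) = 0) := by
  rintro y hy ⟨hF, hdF⟩
  set j := Fin.last (n + 1)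
  have hval : eval y f + eval y l * y j ^ 2 = 0 := by simpa using hF
  have hderiv := fun i => (eval_pderiv_add_mul_X_sq f l i j y).symm.trans (hdF i)
  have hlt : eval y l * y j = 0 := by simpa [hfvar, hlvar] using hderiv j
  have hgrad : ∀ i, eval y (pderiv i f) + y j ^ 2 * eval y (pderiv i l) = 0 := fun i => by
    linear_combination hderiv i - 2 * eval y (pderiv i (X j)) * hlt
  rcases eq_or_ne (y j) 0 with ht | ht
  · exact hXsm y hy ht (by simpa [ht] using hval) fun i => by simpa [ht] using hgrad i
  have hly : eval y l = 0 := (mul_eq_zero.1 hlt).resolve_right ht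
  have hfy : eval y f = 0 := by simpa [hly] using hval
  have hdf := eval_update_pderiv_of_pderiv_eq_zero hfvar
  have hdl := eval_update_pderiv_of_pderiv_eq_zero hlvar
  rcases eq_or_ne (Function.update y j 0) 0 with hy' | hy'
  · refine hl (hl1.eq_zero_of_eval_pderiv_eq_zero y fun i => ?_)
    have hfi : eval y (pderiv i f) = 0 := by
      rw [← hdf i y 0, hy', hf3.pderiv.eval_zero_eq_zero (by norm_num)]
    simpa [hfi, ht] using hgrad i
  · have hindep := htrans _ hy' (Function.update_self j 0 y)
      (by rw [eval_update_of_pderiv_eq_zero hfvar, hfy])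
      (by rw [eval_update_of_pderiv_eq_zero hlvar, hly])
    refine (linearIndependent_fin2.1 hindep).2 (-y j ^ 2) (funext fun i => ?_)
    simp only [Matrix.cons_val_one, Matrix.cons_val_zero, Pi.smul_apply, smul_eq_mul, hdf, hdl]
    linear_combination -hgrad i
end

section
/- The 7×7 symmetric integer matrix G with G_{00}=7, G_{ii}=3 for 1≤i≤6, G_{0i}=G_{i0}=3 for 1≤i≤6, and G_{ij}=1 for 1≤i≠j≤6 is positive definite and has determinant 64. -/
/-!
The LDLᵀ factorisation of `G` obtained by Gaussian elimination has a unipotent lower-triangular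
factor `L` and pivots `7, 12/7, 5/3, 8/5, 3/2, 4/3, 1`. All pivots are positive, so `G` is
congruent to a positive diagonal matrix, and `det G` is the product of the pivots, `64`.
-/

namespace Matrix

variable {n : Type*} [Fintype n] [DecidableEq n]

theorem det_eq_one_of_isLowerTriangular {R : Type*} [CommRing R] [LinearOrder n]
    {L : Matrix n n R} (hL : L.IsLowerTriangular) (hdiag : ∀ i, L i i = 1) : L.det = 1 := by
  simp [det_of_isLowerTriangular L hL, hdiag]

theorem posDef_mul_diagonal_mul_transpose {L : Matrix n n ℝ} (hL : IsUnit L.det) {d : n → ℝ}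
    (hd : ∀ i, 0 < d i) : (L * diagonal d * Lᵀ).PosDef := by
  have hvecMul : Function.Injective L.vecMul :=
    vecMul_injective_iff_isUnit.mpr ((isUnit_iff_isUnit_det L).mpr hL)
  simpa using (PosDef.diagonal hd).mul_mul_conjTranspose_same hvecMul

theorem det_mul_diagonal_mul_transpose {R : Type*} [CommRing R] (L : Matrix n n R) (d : n → R) :
    (L * diagonal d * Lᵀ).det = L.det ^ 2 * ∏ i, d i := by
  rw [det_mul, det_mul, det_transpose, det_diagonal]
  ring

end Matrix

open Matrix

noncomputable def gramL : Matrix (Fin 7) (Fin 7) ℝ :=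
  !![1, 0, 0, 0, 0, 0, 0;
     3/7, 1, 0, 0, 0, 0, 0;
     3/7, -1/6, 1, 0, 0, 0, 0;
     3/7, -1/6, -1/5, 1, 0, 0, 0;
     3/7, -1/6, -1/5, -1/4, 1, 0, 0;
     3/7, -1/6, -1/5, -1/4, -1/3, 1, 0;
     3/7, -1/6, -1/5, -1/4, -1/3, -1/2, 1]

noncomputable def gramPivots : Fin 7 → ℝ := ![7, 12/7, 5/3, 8/5, 3/2, 4/3, 1]

theorem gramL_isLowerTriangular : gramL.IsLowerTriangular := by
  intro i j hij
  fin_cases i <;> fin_cases j <;> first | exact absurd hij (by decide) | simp [gramL]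

theorem det_gramL : gramL.det = 1 :=
  det_eq_one_of_isLowerTriangular gramL_isLowerTriangular fun i => by fin_cases i <;> simp [gramL]

theorem gramPivots_pos (i : Fin 7) : 0 < gramPivots i := by
  fin_cases i <;> norm_num [gramPivots]

theorem gramL_mul_diagonal_gramPivots_mul_transpose :
    gramL * diagonal gramPivots * gramLᵀ =
      !![7, 3, 3, 3, 3, 3, 3;
         3, 3, 1, 1, 1, 1, 1;
         3, 1, 3, 1, 1, 1, 1;
         3, 1, 1, 3, 1, 1, 1;
         3, 1, 1, 1, 3, 1, 1;
         3, 1, 1, 1, 1, 3, 1;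
         3, 1, 1, 1, 1, 1, 3] := by
  ext i j
  rw [mul_apply]
  simp only [mul_diagonal, transpose_apply, Fin.sum_univ_seven]
  fin_cases i <;> fin_cases j <;> simp [gramL, gramPivots] <;> norm_num

/-- The 7×7 Gram matrix `G` of the lattice `M` (with `G₀₀ = 7`, `Gᵢᵢ = 3`,
`G₀ᵢ = Gᵢ₀ = 3` and `Gᵢⱼ = 1` for `1 ≤ i ≠ j ≤ 6`) is positive definite and has
determinant 64. -/
theorem gram_posDef_det :
    let G : Matrix (Fin 7) (Fin 7) ℝ :=
      !![7, 3, 3, 3, 3, 3, 3;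
         3, 3, 1, 1, 1, 1, 1;
         3, 1, 3, 1, 1, 1, 1;
         3, 1, 1, 3, 1, 1, 1;
         3, 1, 1, 1, 3, 1, 1;
         3, 1, 1, 1, 1, 3, 1;
         3, 1, 1, 1, 1, 1, 3]
    G.PosDef ∧ G.det = 64 := by
  intro G
  rw [show G = gramL * diagonal gramPivots * gramLᵀ from
    gramL_mul_diagonal_gramPivots_mul_transpose.symm]
  refine ⟨posDef_mul_diagonal_mul_transpose (by simp [det_gramL]) gramPivots_pos, ?_⟩
  rw [det_mul_diagonal_mul_transpose, det_gramL]
  norm_num [gramPivots, Fin.prod_univ_succ]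
end

section
/- The discriminant group of the lattice M with Gram matrix G (G_{00}=7, G_{ii}=3 for 1≤i≤6, G_{0i}=3, G_{ij}=1 for 1≤i≠j≤6) is isomorphic to (Z/2Z)^6. -/
/-!
The Gram matrix `G` has Smith normal form `diag(1, 2, 2, 2, 2, 2, 2)`: there are unimodular `P`, `Q`
with `P * G * Q = D`. Unimodular changes of basis identify `ℤ⁷ / G ℤ⁷` with `ℤ⁷ / D ℤ⁷`, and the
latter is `(ℤ/2ℤ)⁶` via reduction modulo 2 of the last six coordinates.
-/

open Matrix LinearMap

namespace Matrix

variable {m n R : Type*} [Fintype n] [DecidableEq n] [CommRing R]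

theorem mem_range_mulVecLin_diagonal_iff (d v : n → R) :
    v ∈ range (diagonal d).mulVecLin ↔ ∀ i, d i ∣ v i := by
  simp only [mem_range, mulVecLin_apply, funext_iff, mulVec_diagonal]
  constructor
  · rintro ⟨w, hw⟩ i
    exact hw i ▸ dvd_mul_right _ _
  · intro h
    choose w hw using h
    exact ⟨w, fun i => (hw i).symm⟩

theorem range_mulVecLin_mul_of_isUnit (A : Matrix m n R) {Q : Matrix n n R} (hQ : IsUnit Q) :
    range (A * Q).mulVecLin = range A.mulVecLin := by
  rw [mulVecLin_mul, range_comp_of_range_eq_top]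
  exact range_eq_top.2 (mulVec_surjective_iff_isUnit.2 hQ)

noncomputable def cokernelEquivOfIsUnit [Fintype m] [DecidableEq m] (A : Matrix m n R)
    {P : Matrix m m R} {Q : Matrix n n R} (hP : IsUnit P) (hQ : IsUnit Q) :
    ((m → R) ⧸ range A.mulVecLin) ≃ₗ[R] (m → R) ⧸ range (P * A * Q).mulVecLin :=
  Submodule.Quotient.equiv _ _ (P.toLinearEquiv' hP.invertible) <| by
    rw [range_mulVecLin_mul_of_isUnit _ hQ, mulVecLin_mul, range_comp]
    rfl

end Matrix

def reduceTail (n m : ℕ) : (Fin (n + 1) → ℤ) →ₗ[ℤ] Fin n → ZMod m :=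
  LinearMap.pi fun i => (Int.castAddHom (ZMod m)).toIntLinearMap ∘ₗ LinearMap.proj i.succ

theorem reduceTail_surjective (n m : ℕ) : Function.Surjective (reduceTail n m) := by
  intro y
  choose x hx using fun i => ZMod.intCast_surjective (y i)
  exact ⟨Fin.cons 0 x, funext fun i => by simp [reduceTail, hx]⟩

theorem ker_reduceTail (n m : ℕ) :
    ker (reduceTail n m) = range (diagonal (Fin.cons 1 fun _ : Fin n => (m : ℤ))).mulVecLin := by
  ext v
  rw [mem_range_mulVecLin_diagonal_iff, Fin.forall_fin_succ]
  simp [reduceTail, funext_iff, ZMod.intCast_zmod_eq_zero_iff_dvd]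

noncomputable def cokernelDiagonalConsOneEquiv (n m : ℕ) :
    ((Fin (n + 1) → ℤ) ⧸ range (diagonal (Fin.cons 1 fun _ : Fin n => (m : ℤ))).mulVecLin)
      ≃ₗ[ℤ] Fin n → ZMod m :=
  (Submodule.quotEquivOfEq _ _ (ker_reduceTail n m).symm).trans
    ((reduceTail n m).quotKerEquivOfSurjective (reduceTail_surjective n m))

-- Unimodular row and column operations bringing the Gram matrix to its Smith normal form
-- `diag(1, 2, 2, 2, 2, 2, 2)`; the matrices supplied below are their inverses.
def smithLeft : Matrix (Fin 7) (Fin 7) ℤ :=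
  !![0, 1, 0, 0, 0, 0, 0;
     1, -3, 0, 0, 0, 0, 0;
     -3, 6, 1, 0, 0, 0, 0;
     -3, 5, 1, 1, 0, 0, 0;
     -3, 4, 1, 1, 1, 0, 0;
     -3, 3, 1, 1, 1, 1, 0;
     -3, 2, 1, 1, 1, 1, 1]

def smithRight : Matrix (Fin 7) (Fin 7) ℤ :=
  !![0, -1, 0, 0, 0, 0, -3;
     0, 0, 0, 0, 0, 0, 1;
     1, 3, 1, 0, 0, 0, 1;
     0, 0, -1, 1, 0, 0, 1;
     0, 0, 0, -1, 1, 0, 1;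
     0, 0, 0, 0, -1, 1, 1;
     0, 0, 0, 0, 0, -1, 2]

theorem isUnit_smithLeft : IsUnit smithLeft :=
  isUnit_iff_exists_inv.2 ⟨!![3, 1, 0, 0, 0, 0, 0;
                             1, 0, 0, 0, 0, 0, 0;
                             3, 3, 1, 0, 0, 0, 0;
                             1, 0, -1, 1, 0, 0, 0;
                             1, 0, 0, -1, 1, 0, 0;
                             1, 0, 0, 0, -1, 1, 0;
                             1, 0, 0, 0, 0, -1, 1], by decide⟩

theorem isUnit_smithRight : IsUnit smithRight :=
  isUnit_iff_exists_inv'.2 ⟨!![3, 3, 1, 1, 1, 1, 1;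
                              -1, -3, 0, 0, 0, 0, 0;
                              0, 5, 0, -1, -1, -1, -1;
                              0, 4, 0, 0, -1, -1, -1;
                              0, 3, 0, 0, 0, -1, -1;
                              0, 2, 0, 0, 0, 0, -1;
                              0, 1, 0, 0, 0, 0, 0], by decide⟩

/-- The discriminant group of the lattice `M` with the stated Gram matrix
`G`, i.e. the cokernel of the linear map `ℤ⁷ → ℤ⁷` given by `G`, is isomorphic to
`(ℤ/2ℤ)⁶`. -/
theorem discriminant_group :
    let G : Matrix (Fin 7) (Fin 7) ℤ :=
      !![7, 3, 3, 3, 3, 3, 3;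
         3, 3, 1, 1, 1, 1, 1;
         3, 1, 3, 1, 1, 1, 1;
         3, 1, 1, 3, 1, 1, 1;
         3, 1, 1, 1, 3, 1, 1;
         3, 1, 1, 1, 1, 3, 1;
         3, 1, 1, 1, 1, 1, 3]
    Nonempty (((Fin 7 → ℤ) ⧸ LinearMap.range G.mulVecLin) ≃+ (Fin 6 → ZMod 2)) := by
  intro G
  have hsmith :
      smithLeft * G * smithRight = diagonal (Fin.cons 1 fun _ : Fin 6 => ((2 : ℕ) : ℤ)) := by
    decide
  exact ⟨((G.cokernelEquivOfIsUnit isUnit_smithLeft isUnit_smithRight).trans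
    ((Submodule.quotEquivOfEq _ _ (by rw [hsmith])).trans
      (cokernelDiagonalConsOneEquiv 6 2))).toAddEquiv⟩
end

section
/- The sublattice of vectors in M orthogonal to h² = 3F_0 − F_1 − ... − F_6 has rank 6 and, with respect to the basis β_1 = −F_0 + F_1 + F_2 + F_3, β_j = F_j − F_{j−1} for 2≤j≤6, has Gram matrix equal to twice the Gram matrix of the root lattice E_6, i.e., (h²)^⊥ in M is isometric to E_6(2). -/
/-!
Pairing with `h²` is the linear form `x ↦ 3x₀ + x₁ + ⋯ + x₆`, which kills every `βᵢ`. An explicit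
integral matrix `C` with `C βᵢ = eᵢ` splits every `x` as `∑ (C x)ᵢ βᵢ + ⟨x, h²⟩ F₆`, so the `βᵢ`
are independent and span the kernel over `ℤ`. The Gram matrix is a finite computation.
-/

open Matrix

section CoordinateBasis

variable {R M ι : Type*} [Semiring R] [AddCommMonoid M] [Module R M] [Fintype ι] {β : ι → M}

theorem linearIndependent_of_coord_eq_single [DecidableEq ι] (c : M →ₗ[R] ι → R)
    (hc : ∀ i, c (β i) = Pi.single i 1) : LinearIndependent R β :=
  have hcβ : c ∘ β = Pi.basisFun R ι :=
    funext fun i => (hc i).trans (Pi.basisFun_apply R ι i).symm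
  .of_comp c (hcβ ▸ (Pi.basisFun R ι).linearIndependent)

theorem span_range_eq_ker_of_sum_coord (ℓ : M →ₗ[R] R) (c : M → ι → R)
    (hβ : ∀ i, ℓ (β i) = 0) (hc : ∀ x, ℓ x = 0 → ∑ i, c x i • β i = x) :
    Submodule.span R (Set.range β) = LinearMap.ker ℓ := by
  refine le_antisymm (Submodule.span_le.mpr ?_) fun x hx => ?_
  · rintro _ ⟨i, rfl⟩
    exact hβ i
  · exact (Submodule.mem_span_range_iff_exists_fun R).mpr ⟨c x, hc x hx⟩

end CoordinateBasis

def e6Basis : Fin 6 → Fin 7 → ℤ :=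
  ![![-1, 1, 1, 1, 0, 0, 0],
    ![0, -1, 1, 0, 0, 0, 0],
    ![0, 0, -1, 1, 0, 0, 0],
    ![0, 0, 0, -1, 1, 0, 0],
    ![0, 0, 0, 0, -1, 1, 0],
    ![0, 0, 0, 0, 0, -1, 1]]

-- Coordinates in the basis `β` of the projection of `x` to `(h²)^⊥` along `F₆`.
def e6Coord : Matrix (Fin 6) (Fin 7) ℤ :=
  !![-1, 0, 0, 0, 0, 0, 0;
     -1, -1, 0, 0, 0, 0, 0;
     -2, -1, -1, 0, 0, 0, 0;
     -3, -1, -1, -1, 0, 0, 0;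
     -3, -1, -1, -1, -1, 0, 0;
     -3, -1, -1, -1, -1, -1, 0]

-- `G *ᵥ h²`
def h2Pairing : Fin 7 → ℤ := ![3, 1, 1, 1, 1, 1, 1]

theorem e6Coord_mulVec_e6Basis (i : Fin 6) : e6Coord *ᵥ e6Basis i = Pi.single i 1 := by
  revert i; decide

theorem e6Basis_dotProduct_h2Pairing (i : Fin 6) : e6Basis i ⬝ᵥ h2Pairing = 0 := by
  revert i; decide

theorem sum_e6Coord_smul_e6Basis (x : Fin 7 → ℤ) :
    ∑ i, (e6Coord *ᵥ x) i • e6Basis i + (x ⬝ᵥ h2Pairing) • Pi.single 6 1 = x := by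
  funext j
  fin_cases j <;>
    simp [Fin.sum_univ_succ, e6Coord, e6Basis, h2Pairing, mulVec, dotProduct] <;> ring

/-- The orthogonal complement of `h² = 3F₀ − F₁ − ⋯ − F₆` in the lattice `M`
has rank 6: the vectors `β₁ = −F₀+F₁+F₂+F₃`, `βⱼ = Fⱼ − F_{j−1}` (2 ≤ j ≤ 6) form a
ℤ-basis of it, and their Gram matrix is twice the Gram matrix of the root lattice `E₆`
(for the Dynkin diagram labelling in which the branch node `β₁` is attached to `β₄`);
i.e. `(h²)^⊥ ≅ E₆(2)`. -/
theorem orthogonal_complement_E6_twisted :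
    let G : Matrix (Fin 7) (Fin 7) ℤ :=
      !![7, 3, 3, 3, 3, 3, 3;
         3, 3, 1, 1, 1, 1, 1;
         3, 1, 3, 1, 1, 1, 1;
         3, 1, 1, 3, 1, 1, 1;
         3, 1, 1, 1, 3, 1, 1;
         3, 1, 1, 1, 1, 3, 1;
         3, 1, 1, 1, 1, 1, 3]
    let B : (Fin 7 → ℤ) → (Fin 7 → ℤ) → ℤ := fun x y => x ⬝ᵥ G.mulVec y
    let h2 : Fin 7 → ℤ := ![3, -1, -1, -1, -1, -1, -1]
    let β : Fin 6 → (Fin 7 → ℤ) :=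
      ![![-1, 1, 1, 1, 0, 0, 0],
        ![0, -1, 1, 0, 0, 0, 0],
        ![0, 0, -1, 1, 0, 0, 0],
        ![0, 0, 0, -1, 1, 0, 0],
        ![0, 0, 0, 0, -1, 1, 0],
        ![0, 0, 0, 0, 0, -1, 1]]
    -- Gram matrix of the root lattice E₆ (a symmetric Cartan matrix of type E₆)
    let E6 : Matrix (Fin 6) (Fin 6) ℤ :=
      !![2, 0, 0, -1, 0, 0;
         0, 2, -1, 0, 0, 0;
         0, -1, 2, -1, 0, 0;
         -1, 0, -1, 2, -1, 0;
         0, 0, 0, -1, 2, -1;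
         0, 0, 0, 0, -1, 2]
    LinearIndependent ℤ β ∧
    (Submodule.span ℤ (Set.range β) : Set (Fin 7 → ℤ)) = {x | B x h2 = 0} ∧
    ∀ k l : Fin 6, B (β k) (β l) = 2 * E6 k l := by
  intro G B h2 β E6
  have hG : G *ᵥ h2 = h2Pairing := by decide
  let ℓ := (dotProductBilin ℤ ℤ).flip h2Pairing
  refine ⟨linearIndependent_of_coord_eq_single e6Coord.mulVecLin e6Coord_mulVec_e6Basis, ?_,
    by decide⟩
  have hspan := span_range_eq_ker_of_sum_coord ℓ (fun x => e6Coord *ᵥ x)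
    e6Basis_dotProduct_h2Pairing fun x (hx : x ⬝ᵥ h2Pairing = 0) => by
      simpa only [hx, zero_smul, add_zero] using sum_e6Coord_smul_e6Basis x
  change (Submodule.span ℤ (Set.range e6Basis) : Set _) = {x | x ⬝ᵥ G *ᵥ h2 = 0}
  rw [hspan, hG]
  rfl
end

section
/- In the rank 7 lattice M with Gram matrix G_{00}=7, G_{ii}=3 (1≤i≤6), G_{0i}=3, G_{ij}=1 (1≤i≠j≤6), the linear map s fixing F_4, F_5, F_6 and sending F_0 ↦ 2F_0−F_1−F_2−F_3, F_1 ↦ F_0−F_2−F_3, F_2 ↦ F_0−F_1−F_3, F_3 ↦ F_0−F_1−F_2 is an isometry of M fixing h² = 3F_0 − F_1 − ... − F_6. -/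
/-!
`s` is the reflection of `M` in `β = F₀ − F₁ − F₂ − F₃`. Since `β · β = 4` and `G β = 2 w` with
`w = (−1, −1, −1, −1, 0, 0, 0)`, the rational formula `x ↦ x − 2 (x · β)/(β · β) β` becomes the
integral map `x ↦ x − (w ⬝ᵥ x) β`. A reflection is an involutive isometry, and it fixes `h²`
because `h² · β = 0`.
-/

open Matrix

namespace Matrix

variable {n R : Type*} [Fintype n] [DecidableEq n] [CommRing R]

def reflection (β w : n → R) : Matrix n n R := 1 - vecMulVec β w

theorem reflection_mulVec (β w x : n → R) : reflection β w *ᵥ x = x - (w ⬝ᵥ x) • β := by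
  rw [reflection, sub_mulVec, one_mulVec, vecMulVec_mulVec, op_smul_eq_smul]

theorem reflection_mulVec_of_dotProduct_eq_zero {β w x : n → R} (h : w ⬝ᵥ x = 0) :
    reflection β w *ᵥ x = x := by
  rw [reflection_mulVec, h, zero_smul, sub_zero]

theorem reflection_mul_self {β w : n → R} (h : w ⬝ᵥ β = 2) :
    reflection β w * reflection β w = 1 := by
  rw [reflection, sub_mul, mul_sub, mul_sub, vecMulVec_mul_vecMulVec, h, one_mul, mul_one,
    one_mul, two_smul, vecMulVec_add]
  abel

theorem reflection_dotProduct_mulVec {G : Matrix n n R} (hG : G.IsSymm) {β w : n → R} {c : R}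
    (hβ : G *ᵥ β = c • w) (h : w ⬝ᵥ β = 2) (x y : n → R) :
    reflection β w *ᵥ x ⬝ᵥ G *ᵥ (reflection β w *ᵥ y) = x ⬝ᵥ G *ᵥ y := by
  have hxβ : x ⬝ᵥ G *ᵥ β = c * (w ⬝ᵥ x) := by
    rw [hβ, dotProduct_smul, dotProduct_comm, smul_eq_mul]
  have hβy : β ⬝ᵥ G *ᵥ y = c * (w ⬝ᵥ y) := by
    rw [dotProduct_mulVec, ← mulVec_transpose, hG.eq, hβ, smul_dotProduct, smul_eq_mul]
  have hββ : β ⬝ᵥ G *ᵥ β = 2 * c := by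
    rw [hβ, dotProduct_smul, dotProduct_comm, h, smul_eq_mul, mul_comm]
  simp only [reflection_mulVec, mulVec_sub, mulVec_smul, dotProduct_sub, sub_dotProduct,
    dotProduct_smul, smul_dotProduct, smul_eq_mul, hxβ, hβy, hββ]
  ring

end Matrix

/-- The linear map `s` on the lattice `M` fixing `F₄, F₅, F₆` and sending
`F₀ ↦ 2F₀−F₁−F₂−F₃`, `F₁ ↦ F₀−F₂−F₃`, `F₂ ↦ F₀−F₁−F₃`, `F₃ ↦ F₀−F₁−F₂` (given by the
matrix `S` below, whose columns are the images of the basis vectors) is an isometry of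
`M` fixing `h² = 3F₀ − F₁ − ⋯ − F₆`. -/
theorem s_beta1_isometry :
    let G : Matrix (Fin 7) (Fin 7) ℤ :=
      !![7, 3, 3, 3, 3, 3, 3;
         3, 3, 1, 1, 1, 1, 1;
         3, 1, 3, 1, 1, 1, 1;
         3, 1, 1, 3, 1, 1, 1;
         3, 1, 1, 1, 3, 1, 1;
         3, 1, 1, 1, 1, 3, 1;
         3, 1, 1, 1, 1, 1, 3]
    let S : Matrix (Fin 7) (Fin 7) ℤ :=
      !![2, 1, 1, 1, 0, 0, 0;
         -1, 0, -1, -1, 0, 0, 0;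
         -1, -1, 0, -1, 0, 0, 0;
         -1, -1, -1, 0, 0, 0, 0;
         0, 0, 0, 0, 1, 0, 0;
         0, 0, 0, 0, 0, 1, 0;
         0, 0, 0, 0, 0, 0, 1]
    let h2 : Fin 7 → ℤ := ![3, -1, -1, -1, -1, -1, -1]
    -- `s` is a ℤ-linear automorphism of `M` …
    IsUnit S.det ∧
    -- … preserving the bilinear form …
    (∀ x y : Fin 7 → ℤ, (S.mulVec x) ⬝ᵥ G.mulVec (S.mulVec y) = x ⬝ᵥ G.mulVec y) ∧
    -- … and fixing `h²`
    S.mulVec h2 = h2 := by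
  intro G S h2
  let β : Fin 7 → ℤ := ![1, -1, -1, -1, 0, 0, 0]
  let w : Fin 7 → ℤ := ![-1, -1, -1, -1, 0, 0, 0]
  have hS : S = reflection β w := by decide
  have hG : G.IsSymm := by decide
  have hβ : G *ᵥ β = (2 : ℤ) • w := by decide
  have hwβ : w ⬝ᵥ β = 2 := by decide
  have hwh2 : w ⬝ᵥ h2 = 0 := by decide
  rw [hS]
  exact ⟨isUnit_det_of_right_inverse (reflection_mul_self hwβ),
    reflection_dotProduct_mulVec hG hβ hwβ, reflection_mulVec_of_dotProduct_eq_zero hwh2⟩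
end

section
/- Let v be a primitive vector in an even lattice T with v² > 0 such that the reflection r_v(x) = x − 2((x·v)/v²)v preserves T and the discriminant form of T takes only integer values, with discriminant group A_T ≅ (Z/2Z)^6. Then either v² = 2 and div(v) = 1, or v² = 4 and div(v) = 2. -/
open Matrix

/-!
Since `A_T` is killed by `2`, the vector `v / div(v) ∈ T*` satisfies `2 • (v / div(v)) ∈ T`;
primitivity of `v` then forces `div(v) ∣ 2`. Integrality of the discriminant form at
`v / div(v)` gives `div(v)² ∣ v²`, and together with `2 ∣ v²` and `v² ∣ 2 div(v)` this leaves
only `(v², div(v)) = (2, 1)` or `(4, 2)`.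
-/

theorem Submodule.two_smul_mem_of_quotient_addEquiv {M ι : Type*} [AddCommGroup M]
    {N : Submodule ℤ M} (e : (M ⧸ N) ≃+ (ι → ZMod 2)) (x : M) : (2 : ℤ) • x ∈ N := by
  rw [← Submodule.Quotient.mk_eq_zero, Submodule.Quotient.mk_smul]
  apply e.injective
  funext i
  simp [two_zsmul, CharTwo.add_self_eq_zero]

section

variable {n : Type*}

theorem exists_smul_eq_of_forall_dvd_dotProduct [Fintype n] [DecidableEq n] {d : ℤ}
    {y : n → ℤ} (h : ∀ x : n → ℤ, d ∣ x ⬝ᵥ y) : ∃ x₀ : n → ℤ, d • x₀ = y := by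
  refine ⟨fun i => y i / d, funext fun i => ?_⟩
  have hi : d ∣ y i := by simpa [single_dotProduct] using h (Pi.single i 1)
  exact Int.mul_ediv_cancel' hi

theorem eq_one_or_two_of_smul_eq_two_smul {v w : n → ℤ}
    (hprim : ∀ (c : ℤ) (w : n → ℤ), v = c • w → IsUnit c) {d : ℤ} (hd : 0 < d)
    (h : d • w = (2 : ℤ) • v) : d = 1 ∨ d = 2 := by
  have hcoord : ∀ i, d * w i = 2 * v i := fun i => congrFun h i
  rcases Int.even_or_odd' d with ⟨c, rfl | rfl⟩
  · have hv : v = c • w := funext fun i => by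
      simpa using (mul_left_cancel₀ two_ne_zero ((mul_assoc 2 c (w i)).symm.trans (hcoord i))).symm
    have := Int.isUnit_iff.mp (hprim c w hv)
    omega
  · have hcop : IsCoprime (2 * c + 1) 2 := Int.isCoprime_two_right.mpr (odd_two_mul_add_one c)
    have hdv : ∀ i, 2 * c + 1 ∣ v i := fun i => hcop.dvd_of_dvd_mul_left ⟨w i, (hcoord i).symm⟩
    have hv : v = (2 * c + 1) • fun i => v i / (2 * c + 1) :=
      funext fun i => (Int.mul_ediv_cancel' (hdv i)).symm
    have := Int.isUnit_iff.mp (hprim _ _ hv)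
    omega

theorem inv_mulVec_dotProduct_eq_of_smul_eq_mulVec [Fintype n] [DecidableEq n] {G : Matrix n n ℤ}
    (hdet : G.det ≠ 0) {d : ℤ} (hd : d ≠ 0) {x v : n → ℤ} (hx : d • x = G *ᵥ v) :
    ((G.map (Int.cast : ℤ → ℚ))⁻¹ *ᵥ fun i => (x i : ℚ)) ⬝ᵥ (fun i => (x i : ℚ)) =
      ((v ⬝ᵥ G *ᵥ v : ℤ) : ℚ) / (d : ℚ) ^ 2 := by
  set Q := G.map (Int.cast : ℤ → ℚ)
  have hQ : IsUnit Q.det := by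
    have hQG : Q.det = (G.det : ℚ) := ((Int.castRingHom ℚ).map_det G).symm
    rw [isUnit_iff_ne_zero, hQG]
    exact_mod_cast hdet
  have hcast : ∀ a : n → ℤ, (fun i => ((G *ᵥ a) i : ℚ)) = Q *ᵥ fun i => (a i : ℚ) :=
    fun a => funext fun i => by
      simpa [Q, Function.comp_def] using RingHom.map_mulVec (Int.castRingHom ℚ) G a i
  have hdq : (d : ℚ) ≠ 0 := by exact_mod_cast hd
  have hxq : (fun i => (x i : ℚ)) = (d : ℚ)⁻¹ • Q *ᵥ fun i => (v i : ℚ) := by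
    rw [← hcast, ← hx]
    funext i
    simp [hdq]
  have hn : ((v ⬝ᵥ G *ᵥ v : ℤ) : ℚ) = (fun i => (v i : ℚ)) ⬝ᵥ Q *ᵥ fun i => (v i : ℚ) := by
    rw [← hcast]
    simpa [Function.comp_def] using RingHom.map_dotProduct (Int.castRingHom ℚ) v (G *ᵥ v)
  rw [hxq, mulVec_smul, mulVec_mulVec, nonsing_inv_mul Q hQ, one_mulVec, smul_dotProduct,
    dotProduct_smul, hn, smul_eq_mul, smul_eq_mul]
  field_simp

theorem sq_dvd_of_discriminant_form_integral [Fintype n] [DecidableEq n] {G : Matrix n n ℤ}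
    (hdet : G.det ≠ 0)
    (hqint : ∀ x : n → ℤ, ∃ k : ℤ,
      ((G.map (Int.cast : ℤ → ℚ))⁻¹ *ᵥ fun i => (x i : ℚ)) ⬝ᵥ (fun i => (x i : ℚ)) = k)
    {d : ℤ} (hd : d ≠ 0) {x v : n → ℤ} (hx : d • x = G *ᵥ v) : d ^ 2 ∣ v ⬝ᵥ G *ᵥ v := by
  obtain ⟨k, hk⟩ := hqint x
  rw [inv_mulVec_dotProduct_eq_of_smul_eq_mulVec hdet hd hx,
    div_eq_iff (pow_ne_zero 2 (by exact_mod_cast hd))] at hk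
  exact ⟨k, by rw [mul_comm]; exact_mod_cast hk⟩

end

theorem reflective_vector_types_general (m : ℕ) (Gm : Matrix (Fin m) (Fin m) ℤ)
    (hdet : Gm.det ≠ 0)
    (heven : ∀ x : Fin m → ℤ, 2 ∣ x ⬝ᵥ Gm.mulVec x)
    (hAT : Nonempty (((Fin m → ℤ) ⧸ LinearMap.range Gm.mulVecLin) ≃+ (Fin 6 → ZMod 2)))
    (hqint : ∀ x : Fin m → ℤ, ∃ k : ℤ,
      ((Gm.map (Int.cast : ℤ → ℚ))⁻¹.mulVec (fun i => (x i : ℚ))) ⬝ᵥ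
        (fun i => (x i : ℚ)) = (k : ℚ))
    (v : Fin m → ℤ)
    (hprim : ∀ (c : ℤ) (w : Fin m → ℤ), v = c • w → IsUnit c)
    (hpos : 0 < v ⬝ᵥ Gm.mulVec v)
    (d : ℤ) (hd : 0 < d)
    (hdvd : ∀ x : Fin m → ℤ, d ∣ x ⬝ᵥ Gm.mulVec v)
    (hrefl : (v ⬝ᵥ Gm.mulVec v) ∣ 2 * d) :
    (v ⬝ᵥ Gm.mulVec v = 2 ∧ d = 1) ∨ (v ⬝ᵥ Gm.mulVec v = 4 ∧ d = 2) := by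
  obtain ⟨e⟩ := hAT
  obtain ⟨x₀, hx₀⟩ := exists_smul_eq_of_forall_dvd_dotProduct hdvd
  obtain ⟨w, hw⟩ := Submodule.two_smul_mem_of_quotient_addEquiv e x₀
  have hdw : d • w = (2 : ℤ) • v := mulVec_injective_of_det_ne_zero hdet <| by
    rw [mulVec_smul, mulVec_smul, ← mulVecLin_apply, hw, ← hx₀, smul_comm]
  have hsq := sq_dvd_of_discriminant_form_integral hdet hqint hd.ne' hx₀
  have hle := Int.le_of_dvd (by omega) hrefl
  have htwo := heven v
  rcases eq_one_or_two_of_smul_eq_two_smul hprim hd hdw with rfl | rfl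
  · omega
  · norm_num at hsq
    omega

/-- Let `T` be an even nondegenerate lattice (here given by a Gram matrix
`Gm` on `ℤ^m`) whose discriminant group `A_T = T*/T` (the cokernel of `Gm : ℤ^m → ℤ^m`)
is isomorphic to `(ℤ/2ℤ)⁶` and whose discriminant quadratic form takes only integer
values (i.e. `B(y,y) ∈ ℤ` for all `y` in the dual lattice `Gm⁻¹·ℤ^m`).  Let `v ∈ T` be a
primitive vector with `v² > 0` whose divisibility is `d` (the positive generator of the
ideal `{x·v : x ∈ T}`), and suppose the reflection `r_v` preserves `T`
(equivalently `v² ∣ 2·(x·v)` for all `x ∈ T`).  Then either `v² = 2` and `div(v) = 1`,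
or `v² = 4` and `div(v) = 2`. -/
theorem reflective_vector_types (m : ℕ) (Gm : Matrix (Fin m) (Fin m) ℤ)
    (hsymm : Gm.IsSymm) (hdet : Gm.det ≠ 0)
    (heven : ∀ x : Fin m → ℤ, 2 ∣ x ⬝ᵥ Gm.mulVec x)
    (hAT : Nonempty (((Fin m → ℤ) ⧸ LinearMap.range Gm.mulVecLin) ≃+ (Fin 6 → ZMod 2)))
    (hqint : ∀ x : Fin m → ℤ, ∃ k : ℤ,
      ((Gm.map (Int.cast : ℤ → ℚ))⁻¹.mulVec (fun i => (x i : ℚ))) ⬝ᵥ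
        (fun i => (x i : ℚ)) = (k : ℚ))
    (v : Fin m → ℤ)
    (hprim : ∀ (c : ℤ) (w : Fin m → ℤ), v = c • w → IsUnit c)
    (hpos : 0 < v ⬝ᵥ Gm.mulVec v)
    (d : ℤ) (hd : 0 < d)
    (hdvd : ∀ x : Fin m → ℤ, d ∣ x ⬝ᵥ Gm.mulVec v)
    (hgen : ∃ x : Fin m → ℤ, x ⬝ᵥ Gm.mulVec v = d)
    (hrefl : (v ⬝ᵥ Gm.mulVec v) ∣ 2 * d) :
    (v ⬝ᵥ Gm.mulVec v = 2 ∧ d = 1) ∨ (v ⬝ᵥ Gm.mulVec v = 4 ∧ d = 2) :=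
  reflective_vector_types_general m Gm hdet heven hAT hqint v hprim hpos d hd hdvd hrefl
end
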